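/- arXiv:2305.00743 — 5 statements merged into one kernel-verified Lean document; each statement's English description precedes it below -/
import Mathlib

section
/- Every connected component of the complement ℝ^n ∖ 𝒜_p of the amoeba of a Laurent polynomial p is a convex subset of ℝ^n. -/
open MeasureTheory Real

noncomputable section

/-- Evaluation of the Laurent polynomial with support `A` and coefficients `c`
at the point `z`. -/
def lEval {n : ℕ} (A : Finset (Fin n → ℤ)) (c : (Fin n → ℤ) → ℂ)
    (z : Fin n → ℂ) : ℂ :=
  ∑ α ∈ A, c α * ∏ i, z i ^ α i

/-- The coordinatewise logarithm of moduli. -/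
def logMap {n : ℕ} (z : Fin n → ℂ) : Fin n → ℝ :=
  fun i => Real.log ‖z i‖

/-- The amoeba of the Laurent polynomial with support `A` and coefficients `c`. -/
def amoeba {n : ℕ} (A : Finset (Fin n → ℤ)) (c : (Fin n → ℤ) → ℂ) :
    Set (Fin n → ℝ) :=
  logMap '' {z | (∀ i, z i ≠ 0) ∧ lEval A c z = 0}

/-- The point of the complex torus with radial coordinates `e^u` and angles `θ`. -/
def tPt {n : ℕ} (u θ : Fin n → ℝ) : Fin n → ℂ :=
  fun i => Complex.exp (u i + θ i * Complex.I)

/-- The cube `[0, 2π]^n`. -/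
def cube (n : ℕ) : Set (Fin n → ℝ) := Set.univ.pi fun _ => Set.Icc 0 (2 * π)

/-- The order vector of a point `u` in the amoeba complement. -/
def order {n : ℕ} (A : Finset (Fin n → ℤ)) (c : (Fin n → ℤ) → ℂ)
    (u : Fin n → ℝ) : Fin n → ℂ := fun j =>
  (((2 * π) ^ n : ℝ) : ℂ)⁻¹ *
    ∫ θ in cube n,
      (∑ α ∈ A, c α * (α j : ℂ) * ∏ i, tPt u θ i ^ α i) / lEval A c (tPt u θ)

/-- The Ronkin function. -/
def ronkin {n : ℕ} (A : Finset (Fin n → ℤ)) (c : (Fin n → ℤ) → ℂ)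
    (x : Fin n → ℝ) : ℝ :=
  ((2 * π) ^ n)⁻¹ * ∫ θ in cube n, Real.log ‖lEval A c (tPt x θ)‖

/-- The Newton polytope of the support `A`. -/
def newton {n : ℕ} (A : Finset (Fin n → ℤ)) : Set (Fin n → ℝ) :=
  convexHull ℝ ((fun (α : Fin n → ℤ) (i : Fin n) => (α i : ℝ)) '' (A : Set (Fin n → ℤ)))

end

open Polynomial Metric

open scoped Classical

noncomputable section AP

lemma circleIntegral_zero (c : ℂ) (R : ℝ) : (∮ _s in C(c, R), (0 : ℂ)) = 0 := by
  simpa using circleIntegral.integral_smul (0 : ℂ) (fun _ => (1 : ℂ)) c R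

lemma circleIntegral_add {f g : ℂ → ℂ} {c : ℂ} {R : ℝ} (hf : CircleIntegrable f c R)
    (hg : CircleIntegrable g c R) :
    (∮ z in C(c, R), (f z + g z)) = (∮ z in C(c, R), f z) + ∮ z in C(c, R), g z := by
  have hnegeq : (∮ z in C(c, R), -(g z)) = -(∮ z in C(c, R), g z) := by
    simpa using circleIntegral.integral_smul (-1 : ℂ) g c R
  have h3 := circleIntegral.integral_sub hf hg.neg
  simp only [Pi.neg_apply] at h3
  rw [hnegeq] at h3
  have heq : (fun z => f z + g z) = fun z => f z - -(g z) := by funext z; ring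
  rw [heq]
  rw [h3, sub_neg_eq_add]

lemma eval_msprod_ne {m : Multiset ℂ} {s : ℂ} (hs : ∀ r ∈ m, s ≠ r) :
    ((m.map fun r => X - C r).prod).eval s ≠ 0 := by
  rw [Polynomial.eval_multiset_prod, Multiset.map_map]
  refine Multiset.prod_ne_zero ?_
  intro h0
  rw [Multiset.mem_map] at h0
  obtain ⟨r, hr, hr0⟩ := h0
  simp only [Function.comp_apply, eval_sub, eval_X, eval_C] at hr0
  exact hs r hr (by linear_combination hr0)

private lemma div_form (A B cc : ℂ) (hA : A ≠ 0) (hc : cc ≠ 0) :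
    (A + cc * B) / (cc * A) = cc⁻¹ + B / A := by
  field_simp

lemma logderiv_prod (a : ℂ) (ha : a ≠ 0) (m : Multiset ℂ) (s : ℂ) (hs : ∀ r ∈ m, s ≠ r) :
    (derivative (C a * (m.map (fun r => X - C r)).prod)).eval s
      / (C a * (m.map (fun r => X - C r)).prod).eval s
      = (m.map (fun r => (s - r)⁻¹)).sum := by
  induction m using Multiset.induction with
  | empty => simp
  | cons r m ih =>
      have hsr : s - r ≠ 0 := sub_ne_zero.mpr (hs r (Multiset.mem_cons_self r m))
      have hs' : ∀ x ∈ m, s ≠ x := fun x hx => hs x (Multiset.mem_cons_of_mem hx)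
      have hQm : (C a * (m.map (fun r => X - C r)).prod).eval s ≠ 0 := by
        rw [eval_mul, eval_C]
        exact mul_ne_zero ha (eval_msprod_ne hs')
      have key : C a * ((r ::ₘ m).map (fun r => X - C r)).prod
          = (X - C r) * (C a * (m.map (fun r => X - C r)).prod) := by
        rw [Multiset.map_cons, Multiset.prod_cons]; ring
      rw [key, Multiset.map_cons, Multiset.sum_cons, ← ih hs', derivative_mul]
      simp only [derivative_sub, derivative_X, derivative_C, sub_zero, one_mul,
        eval_add, eval_mul, eval_sub, eval_X, eval_C]
      exact div_form _ _ _ (mul_ne_zero ha (eval_msprod_ne hs')) hsr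

lemma integral_inv_sub {R : ℝ} (hR : 0 < R) (r : ℂ) (hr : ‖r‖ ≠ R) :
    (∮ s in C(0, R), (s - r)⁻¹) = if ‖r‖ < R then 2 * Real.pi * Complex.I else 0 := by
  rcases lt_or_gt_of_ne hr with h | h
  · rw [if_pos h]
    exact circleIntegral.integral_sub_inv_of_mem_ball (by simpa using h)
  · rw [if_neg (not_lt.mpr h.le)]
    refine Complex.circleIntegral_eq_zero_of_differentiable_on_off_countable hR.le
      Set.countable_empty ?_ ?_
    · intro s hsmem
      have hne : s - r ≠ 0 := by
        intro h0
        have hsr : s = r := by linear_combination h0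
        subst hsr
        rw [mem_closedBall_zero_iff] at hsmem
        exact absurd (lt_of_le_of_lt hsmem h) (lt_irrefl _)
      exact ((continuousAt_id.sub continuousAt_const).inv₀ hne).continuousWithinAt
    · intro z hz
      have hne : z - r ≠ 0 := by
        intro h0
        have hzr : z = r := by linear_combination h0
        subst hzr
        have := mem_ball_zero_iff.mp hz.1
        exact absurd (lt_trans this h) (lt_irrefl _)
      exact (differentiableAt_id.sub_const r).inv hne

lemma continuousOn_msum {R : ℝ} (m : Multiset ℂ) (hm : ∀ r ∈ m, ‖r‖ ≠ R) :
    ContinuousOn (fun s => (m.map (fun r => (s - r)⁻¹)).sum) (sphere (0 : ℂ) R) := by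
  induction m using Multiset.induction with
  | empty => simpa using continuousOn_const
  | cons r m ih =>
      simp only [Multiset.map_cons, Multiset.sum_cons]
      refine ContinuousOn.add ?_ (ih fun x hx => hm x (Multiset.mem_cons_of_mem hx))
      intro s hsm
      have hne : s - r ≠ 0 := by
        intro h0
        have hsr : s = r := by linear_combination h0
        subst hsr
        exact hm s (Multiset.mem_cons_self _ _) (mem_sphere_zero_iff_norm.mp hsm)
      exact ((continuousAt_id.sub continuousAt_const).inv₀ hne).continuousWithinAt

lemma integral_msum {R : ℝ} (hR : 0 < R) (m : Multiset ℂ) (hm : ∀ r ∈ m, ‖r‖ ≠ R) :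
    (∮ s in C(0, R), (m.map (fun r => (s - r)⁻¹)).sum)
      = (2 * Real.pi * Complex.I) *
        (Multiset.card (m.filter (fun r => ‖r‖ < R)) : ℂ) := by
  induction m using Multiset.induction with
  | empty => simpa using circleIntegral_zero 0 R
  | cons r m ih =>
      have hm' : ∀ x ∈ m, ‖x‖ ≠ R := fun x hx => hm x (Multiset.mem_cons_of_mem hx)
      have h1 : CircleIntegrable (fun s => (s - r)⁻¹) 0 R := by
        refine ContinuousOn.circleIntegrable hR.le ?_
        have := continuousOn_msum ({r} : Multiset ℂ)
          (by simpa using hm r (Multiset.mem_cons_self _ _))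
        simpa using this
      have h2 : CircleIntegrable (fun s => (m.map (fun r => (s - r)⁻¹)).sum) 0 R :=
        ContinuousOn.circleIntegrable hR.le (continuousOn_msum m hm')
      have heq : (∮ s in C(0, R), ((r ::ₘ m).map (fun r => (s - r)⁻¹)).sum)
          = (∮ s in C(0, R), ((s - r)⁻¹ + (m.map (fun r => (s - r)⁻¹)).sum)) := by
        congr 1; funext s; simp [Multiset.map_cons, Multiset.sum_cons]
      rw [heq, circleIntegral_add h1 h2, ih hm', integral_inv_sub hR r
        (hm r (Multiset.mem_cons_self _ _)), Multiset.filter_cons]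
      by_cases hc : ‖r‖ < R
      · simp only [hc, if_pos]
        rw [Multiset.card_add, Multiset.card_singleton]
        push_cast
        ring
      · simp only [hc, if_neg, not_false_iff]
        simp

theorem argPrinciple (Q : ℂ[X]) (hQ : Q ≠ 0) {R : ℝ} (hR : 0 < R)
    (h : ∀ r ∈ Q.roots, ‖r‖ ≠ R) :
    (∮ s in C(0, R), (derivative Q).eval s / Q.eval s)
      = (2 * Real.pi * Complex.I) *
        (Multiset.card (Q.roots.filter fun r => ‖r‖ < R) : ℂ) := by
  have hfact := (IsAlgClosed.splits Q).eq_prod_roots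
  have ha : Q.leadingCoeff ≠ 0 := leadingCoeff_ne_zero.mpr hQ
  rw [← integral_msum hR Q.roots h]
  refine circleIntegral.integral_congr hR.le ?_
  intro s hsm
  have hs : ∀ r ∈ Q.roots, s ≠ r := by
    intro r hr he
    subst he
    exact h s hr (mem_sphere_zero_iff_norm.mp hsm)
  have hld := logderiv_prod Q.leadingCoeff ha Q.roots s hs
  simp only
  rw [← hld, ← hfact]

end AP

noncomputable section


section Setup

variable {n : ℕ} (A : Finset (Fin n → ℤ)) (c : (Fin n → ℤ) → ℂ) (k : Fin n → ℤ)

def dk (α : Fin n → ℤ) : ℤ := ∑ i, α i * k i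

def MM : ℕ := A.sup fun α => (-(dk k α)).toNat

def ee (α : Fin n → ℤ) : ℕ := (dk k α + MM A k).toNat

lemma ee_cast {α : Fin n → ℤ} (hα : α ∈ A) : ((ee A k α : ℤ)) = dk k α + MM A k := by
  refine Int.toNat_of_nonneg ?_
  have h1 : (-(dk k α)).toNat ≤ MM A k := Finset.le_sup (f := fun α => (-(dk k α)).toNat) hα
  have h2 : -(dk k α) ≤ ((-(dk k α)).toNat : ℤ) := Int.self_le_toNat _
  have h3 : (((-(dk k α)).toNat : ℤ)) ≤ (MM A k : ℤ) := by exact_mod_cast h1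
  omega

def Qp (z : Fin n → ℂ) : Polynomial ℂ :=
  ∑ α ∈ A, Polynomial.C (c α * ∏ i, z i ^ α i) * Polynomial.X ^ (ee A k α)

lemma zpow_finset_sum {s : ℂ} (hs : s ≠ 0) {ι : Type*} (t : Finset ι) (f : ι → ℤ) :
    (∏ i ∈ t, s ^ f i) = s ^ (∑ i ∈ t, f i) := by
  classical
  induction t using Finset.induction with
  | empty => simp
  | insert _ _ h ih => rw [Finset.prod_insert h, Finset.sum_insert h, ih, ← zpow_add₀ hs]

lemma Qp_eval (z : Fin n → ℂ) {s : ℂ} (hs : s ≠ 0) :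
    (Qp A c k z).eval s = s ^ (MM A k) * lEval A c (fun i => z i * s ^ (k i)) := by
  rw [Qp, eval_finset_sum, lEval, Finset.mul_sum]
  refine Finset.sum_congr rfl fun α hα => ?_
  rw [eval_mul, eval_C, eval_pow, eval_X]
  have h1 : ∀ i, (z i * s ^ (k i)) ^ (α i) = z i ^ (α i) * s ^ (k i * α i) := by
    intro i
    rw [mul_zpow, ← zpow_mul]
  simp only [h1]
  rw [Finset.prod_mul_distrib]
  have h2 : (∏ i, s ^ (k i * α i)) = s ^ (∑ i, k i * α i) := by
    rw [zpow_finset_sum hs]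
  rw [h2]
  have h3 : (s : ℂ) ^ (ee A k α) = s ^ ((ee A k α : ℤ)) := by
    rw [zpow_natCast]
  have h4 : (s : ℂ) ^ (MM A k) = s ^ ((MM A k : ℤ)) := by
    rw [zpow_natCast]
  rw [h3, h4, ee_cast A k hα]
  have h5 : dk k α = ∑ i, k i * α i := by
    rw [dk]
    exact Finset.sum_congr rfl fun i _ => mul_comm _ _
  rw [← h5, zpow_add₀ hs]
  ring

lemma Qp_ne_zero {z : Fin n → ℂ} (hz : lEval A c z ≠ 0) : Qp A c k z ≠ 0 := by
  intro h0
  apply hz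
  have := Qp_eval A c k z (s := 1) one_ne_zero
  rw [h0] at this
  simp only [eval_zero, one_zpow, mul_one, one_pow, one_mul] at this
  exact this.symm

lemma Qp_scale (z : Fin n → ℂ) {w : ℂ} (hw : w ≠ 0) :
    Qp A c k (fun i => z i * w ^ (k i))
      = (w ^ (MM A k))⁻¹ • ((Qp A c k z).comp (Polynomial.C w * Polynomial.X)) := by
  apply Polynomial.eq_of_infinite_eval_eq
  refine Set.Infinite.mono ?_ ((Set.finite_singleton (0 : ℂ)).infinite_compl)
  intro s hs
  simp only [Set.mem_compl_iff, Set.mem_singleton_iff] at hs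
  simp only [Set.mem_setOf_eq]
  have hws : w * s ≠ 0 := mul_ne_zero hw hs
  rw [Qp_eval A c k _ hs]
  rw [Polynomial.smul_eq_C_mul, eval_mul, eval_C, eval_comp, eval_mul, eval_C, eval_X,
    Qp_eval A c k z hws]
  have h1 : (fun i => z i * w ^ (k i) * s ^ (k i)) = fun i => z i * (w * s) ^ (k i) := by
    funext i
    rw [mul_zpow]
    ring
  rw [h1, mul_pow]
  field_simp

lemma Qp_scale_roots (z : Fin n → ℂ) (hz : lEval A c z ≠ 0) {w : ℂ} (hw : w ≠ 0) :
    (Qp A c k (fun i => z i * w ^ (k i))).roots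
      = (Qp A c k z).roots.map (fun r => r / w) := by
  have hQ : Qp A c k z ≠ 0 := Qp_ne_zero A c k hz
  have hfact := (IsAlgClosed.splits (Qp A c k z)).eq_prod_roots
  have hlc : (Qp A c k z).leadingCoeff ≠ 0 := leadingCoeff_ne_zero.mpr hQ
  rw [Qp_scale A c k z hw, Polynomial.smul_eq_C_mul,
    roots_C_mul _ (inv_ne_zero (pow_ne_zero _ hw))]
  conv_lhs => rw [hfact]
  rw [Polynomial.mul_comp, Polynomial.C_comp, Polynomial.multiset_prod_comp,
    Multiset.map_map]
  have h2 : ((Qp A c k z).roots.map ((fun p => p.comp (C w * X)) ∘ fun a => X - C a))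
      = ((Qp A c k z).roots.map fun r => C w * (X - C (r / w))) := by
    refine Multiset.map_congr rfl fun r _ => ?_
    simp only [Function.comp_apply]
    rw [Polynomial.sub_comp, Polynomial.X_comp, Polynomial.C_comp]
    rw [mul_sub, ← Polynomial.C_mul, mul_div_cancel₀ _ hw]
  rw [h2, Multiset.prod_map_mul]
  have h3 : ((Qp A c k z).roots.map fun _ => C w).prod
      = C (w ^ Multiset.card (Qp A c k z).roots) := by
    rw [Multiset.map_const', Multiset.prod_replicate, ← Polynomial.C_pow]
  rw [h3, ← mul_assoc, ← Polynomial.C_mul, roots_C_mul _ (by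
    refine mul_ne_zero hlc (pow_ne_zero _ hw))]
  have h4 : ((Qp A c k z).roots.map fun r => X - C (r / w))
      = (((Qp A c k z).roots.map fun r => r / w).map fun r => X - C r) := by
    rw [Multiset.map_map]; rfl
  rw [h4, roots_multiset_prod_X_sub_C]

end Setup


section Count

variable {n : ℕ} (A : Finset (Fin n → ℤ)) (c : (Fin n → ℤ) → ℂ) (k : Fin n → ℤ)

def Uset : Set (Fin n → ℂ) := {z | (∀ i, z i ≠ 0) ∧ logMap z ∉ amoeba A c}

lemma logMap_mul_zpow {z : Fin n → ℂ} (hz : ∀ i, z i ≠ 0) {s : ℂ}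
    (hs : ‖s‖ = 1) : logMap (fun i => z i * s ^ (k i)) = logMap z := by
  funext i
  simp only [logMap, norm_mul, norm_zpow, hs, one_zpow, mul_one]

lemma Qp_eval_ne_of_mem_U {z : Fin n → ℂ} (hz : z ∈ Uset A c) {s : ℂ}
    (hs : ‖s‖ = 1) : (Qp A c k z).eval s ≠ 0 := by
  have hs0 : s ≠ 0 := by
    intro h0; rw [h0] at hs; simp at hs
  rw [Qp_eval A c k z hs0]
  refine mul_ne_zero (pow_ne_zero _ hs0) ?_
  intro h0
  refine hz.2 ?_
  refine ⟨fun i => z i * s ^ (k i), ⟨fun i => mul_ne_zero (hz.1 i) (zpow_ne_zero _ hs0), h0⟩, ?_⟩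
  exact logMap_mul_zpow k hz.1 hs

lemma lEval_ne_of_mem_U {z : Fin n → ℂ} (hz : z ∈ Uset A c) : lEval A c z ≠ 0 := by
  intro h0
  exact hz.2 ⟨z, ⟨hz.1, h0⟩, rfl⟩

lemma roots_abs_ne_one {z : Fin n → ℂ} (hz : z ∈ Uset A c) :
    ∀ r ∈ (Qp A c k z).roots, ‖r‖ ≠ 1 := by
  intro r hr habs
  have := Polynomial.isRoot_of_mem_roots hr
  exact Qp_eval_ne_of_mem_U A c k hz habs this

/-- number of roots of `Qp` in the open disc of radius `R` -/
def cnt (R : ℝ) (z : Fin n → ℂ) : ℕ :=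
  Multiset.card ((Qp A c k z).roots.filter fun r => ‖r‖ < R)

def Nfun (z : Fin n → ℂ) : ℂ :=
  ∮ s in C(0, 1), (Polynomial.derivative (Qp A c k z)).eval s / (Qp A c k z).eval s

lemma Nfun_eq {z : Fin n → ℂ} (hz : z ∈ Uset A c) :
    Nfun A c k z = (2 * Real.pi * Complex.I) * (cnt A c k 1 z : ℂ) :=
  argPrinciple _ (Qp_ne_zero A c k (lEval_ne_of_mem_U A c hz)) one_pos
    (roots_abs_ne_one A c k hz)

lemma continuousOn_Nfun : ContinuousOn (Nfun A c k) (Uset A c) := by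
  rw [continuousOn_iff_continuous_restrict]
  have hrfl : (Uset A c).restrict (Nfun A c k)
      = fun z : Uset A c => ∫ θ in (0:ℝ)..(2*Real.pi),
          (fun (z : Uset A c) (θ : ℝ) => deriv (circleMap 0 1) θ •
            ((Polynomial.derivative (Qp A c k z.val)).eval (circleMap 0 1 θ) /
              (Qp A c k z.val).eval (circleMap 0 1 θ))) z θ := rfl
  rw [show (Uset A c).domRestrict (Nfun A c k) = _ from hrfl]
  refine intervalIntegral.continuous_parametric_intervalIntegral_of_continuous'
    (μ := MeasureTheory.volume) ?_ _ _
  have habs : ∀ θ : ℝ, ‖circleMap 0 1 θ‖ = 1 := by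
    intro θ; rw [norm_circleMap_zero]; norm_num
  have hcm : Continuous fun p : Uset A c × ℝ => circleMap 0 1 p.2 :=
    (continuous_circleMap 0 1).comp continuous_snd
  have hcoeff : ∀ α : Fin n → ℤ, Continuous fun p : Uset A c × ℝ =>
      c α * ∏ i, (p.1.val i) ^ (α i) := by
    intro α
    refine continuous_const.mul (continuous_finset_prod _ fun i _ => ?_)
    refine continuous_iff_continuousAt.mpr fun p => ?_
    refine ContinuousAt.zpow₀ ?_ _ (Or.inl (p.1.prop.1 i))
    exact ((continuous_apply i).comp (continuous_subtype_val.comp continuous_fst)).continuousAt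
  have hden : Continuous fun p : Uset A c × ℝ =>
      (Qp A c k p.1.val).eval (circleMap 0 1 p.2) := by
    have : (fun p : Uset A c × ℝ => (Qp A c k p.1.val).eval (circleMap 0 1 p.2))
        = fun p => ∑ α ∈ A, (c α * ∏ i, (p.1.val i) ^ (α i)) * (circleMap 0 1 p.2) ^ (ee A k α) := by
      funext p
      rw [Qp, Polynomial.eval_finset_sum]
      refine Finset.sum_congr rfl fun α _ => ?_
      rw [Polynomial.eval_mul, Polynomial.eval_C, Polynomial.eval_pow, Polynomial.eval_X]
    rw [this]
    exact continuous_finset_sum _ fun α _ => (hcoeff α).mul (hcm.pow _)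
  have hnum : Continuous fun p : Uset A c × ℝ =>
      (Polynomial.derivative (Qp A c k p.1.val)).eval (circleMap 0 1 p.2) := by
    have : (fun p : Uset A c × ℝ =>
        (Polynomial.derivative (Qp A c k p.1.val)).eval (circleMap 0 1 p.2))
        = fun p => ∑ α ∈ A, ((c α * ∏ i, (p.1.val i) ^ (α i)) * (ee A k α : ℂ))
            * (circleMap 0 1 p.2) ^ (ee A k α - 1) := by
      funext p
      rw [Qp, Polynomial.derivative_sum, Polynomial.eval_finset_sum]
      refine Finset.sum_congr rfl fun α _ => ?_
      rw [Polynomial.derivative_C_mul_X_pow, Polynomial.eval_mul, Polynomial.eval_C,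
        Polynomial.eval_pow, Polynomial.eval_X]
    rw [this]
    exact continuous_finset_sum _ fun α _ =>
      ((hcoeff α).mul continuous_const).mul (hcm.pow _)
  have hdc : Continuous fun p : Uset A c × ℝ => deriv (circleMap 0 1) p.2 := by
    have : (fun p : Uset A c × ℝ => deriv (circleMap 0 1) p.2)
        = fun p => circleMap 0 1 p.2 * Complex.I := by
      funext p; rw [deriv_circleMap]
    rw [this]
    exact hcm.mul continuous_const
  have hdenne : ∀ p : Uset A c × ℝ, (Qp A c k p.1.val).eval (circleMap 0 1 p.2) ≠ 0 :=
    fun p => Qp_eval_ne_of_mem_U A c k p.1.prop (habs p.2)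
  exact (hdc.smul (hnum.div hden hdenne) : )

lemma cnt_eq_on_preconnected {V : Set (Fin n → ℂ)} (hVU : V ⊆ Uset A c)
    (hV : IsPreconnected V) {z₁ z₂ : Fin n → ℂ} (h1 : z₁ ∈ V) (h2 : z₂ ∈ V) :
    cnt A c k 1 z₁ = cnt A c k 1 z₂ := by
  set g : (Fin n → ℂ) → ℝ := fun z => (Nfun A c k z / (2 * Real.pi * Complex.I)).re with hg
  have h2piI : (2 * Real.pi * Complex.I : ℂ) ≠ 0 := by
    simp [Real.pi_ne_zero, Complex.I_ne_zero]
  have hgval : ∀ z ∈ V, g z = (cnt A c k 1 z : ℝ) := by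
    intro z hz
    rw [hg]
    simp only
    rw [Nfun_eq A c k (hVU hz), mul_comm, mul_div_assoc, div_self h2piI, mul_one]
    simp
  have hgc : ContinuousOn g V := by
    refine Complex.continuous_re.comp_continuousOn ?_
    exact ((continuousOn_Nfun A c k).mono hVU).div_const _
  by_contra hne
  wlog hlt : cnt A c k 1 z₁ < cnt A c k 1 z₂ generalizing z₁ z₂
  · exact this h2 h1 (Ne.symm hne) (by omega)
  have himg : IsPreconnected (g '' V) := hV.image g hgc
  have hoc := himg.ordConnected
  have hmid : ((cnt A c k 1 z₁ : ℝ) + 1/2) ∈ g '' V := by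
    refine hoc.out ⟨z₁, h1, rfl⟩ ⟨z₂, h2, rfl⟩ ?_
    rw [Set.mem_Icc, hgval z₁ h1, hgval z₂ h2]
    constructor
    · linarith
    · have : (cnt A c k 1 z₁ : ℝ) + 1 ≤ (cnt A c k 1 z₂ : ℝ) := by exact_mod_cast hlt
      linarith
  obtain ⟨z₃, hz₃, hz₃val⟩ := hmid
  rw [hgval z₃ hz₃] at hz₃val
  have h1' : ((2:ℝ) * cnt A c k 1 z₃) = 2 * cnt A c k 1 z₁ + 1 := by linarith
  have : (2 * cnt A c k 1 z₃) = 2 * cnt A c k 1 z₁ + 1 := by exact_mod_cast h1'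
  omega

end Count

section Rational

variable {n : ℕ} (A : Finset (Fin n → ℤ)) (c : (Fin n → ℤ) → ℂ)


lemma tPt_ne (u θ : Fin n → ℝ) (i : Fin n) : tPt u θ i ≠ 0 := Complex.exp_ne_zero _

lemma logMap_tPt (u θ : Fin n → ℝ) : logMap (tPt u θ) = u := by
  funext i
  simp only [logMap, tPt, Complex.norm_exp]
  have : ((u i : ℂ) + (θ i : ℂ) * Complex.I).re = u i := by simp
  rw [this, Real.log_exp]

lemma tPt_logMap_arg {z : Fin n → ℂ} (hz : ∀ i, z i ≠ 0) :
    tPt (logMap z) (fun i => (z i).arg) = z := by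
  funext i
  simp only [tPt, logMap]
  rw [Complex.exp_add]
  have h1 : Complex.exp ((Real.log (‖z i‖) : ℝ) : ℂ)
      = ((‖z i‖ : ℝ) : ℂ) := by
    rw [← Complex.ofReal_exp, Real.exp_log (norm_pos_iff.mpr (hz i))]
  rw [h1, Complex.norm_mul_exp_arg_mul_I]

def Wset (x₀ : Fin n → ℝ) : Set (Fin n → ℂ) :=
  {z | (∀ i, z i ≠ 0) ∧ logMap z ∈ connectedComponentIn (amoeba A c)ᶜ x₀}

lemma Wset_subset_Uset (x₀ : Fin n → ℝ) : Wset A c x₀ ⊆ Uset A c := by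
  intro z hz
  exact ⟨hz.1, connectedComponentIn_subset _ _ hz.2⟩

lemma isPreconnected_Wset (x₀ : Fin n → ℝ) : IsPreconnected (Wset A c x₀) := by
  have himg : Wset A c x₀ = (fun q : (Fin n → ℝ) × (Fin n → ℝ) => tPt q.1 q.2) ''
      ((connectedComponentIn (amoeba A c)ᶜ x₀) ×ˢ (Set.univ : Set (Fin n → ℝ))) := by
    apply Set.Subset.antisymm
    · intro z hz
      exact ⟨⟨logMap z, fun i => (z i).arg⟩, ⟨hz.2, trivial⟩, tPt_logMap_arg hz.1⟩
    · rintro z ⟨⟨u, θ⟩, ⟨hu, -⟩, rfl⟩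
      exact ⟨tPt_ne u θ, by rwa [logMap_tPt]⟩
  rw [himg]
  refine IsPreconnected.image ?_ _ ?_
  · exact (isPreconnected_connectedComponentIn).prod isPreconnected_univ
  · refine Continuous.continuousOn ?_
    refine continuous_pi fun i => ?_
    refine Complex.continuous_exp.comp ?_
    refine Continuous.add ?_ ?_
    · exact Complex.continuous_ofReal.comp ((continuous_apply i).comp continuous_fst)
    · exact (Complex.continuous_ofReal.comp ((continuous_apply i).comp continuous_snd)).mul
        continuous_const

lemma ratSeg (x : Fin n → ℝ) (hx : x ∈ (amoeba A c)ᶜ) (k : Fin n → ℤ) (τ : ℝ) (hτ : 0 ≤ τ)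
    (hy : (fun i => x i + τ * k i) ∈ connectedComponentIn (amoeba A c)ᶜ x)
    (t : ℝ) (ht0 : 0 ≤ t) (ht1 : t ≤ 1) :
    (fun i => x i + (t * τ) * k i) ∉ amoeba A c := by
  intro hmem
  have httτ : t * τ ≤ τ := by nlinarith
  rcases eq_or_lt_of_le httτ with heq | hlt
  · have : (fun i => x i + (t * τ) * k i) = (fun i => x i + τ * k i) := by
      funext i; rw [heq]
    rw [this] at hmem
    exact (connectedComponentIn_subset _ _ hy) hmem
  · obtain ⟨zst, ⟨hznz, hzeval⟩, hzlog⟩ := hmem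
    set ρ : ℝ := Real.exp (t * τ) with hρdef
    have hρpos : 0 < ρ := Real.exp_pos _
    have hρ0 : (ρ : ℂ) ≠ 0 := by exact_mod_cast hρpos.ne'
    set w : ℝ := Real.exp τ with hwdef
    have hwpos : 0 < w := Real.exp_pos _
    have hw0 : (w : ℂ) ≠ 0 := by exact_mod_cast hwpos.ne'
    set z : Fin n → ℂ := fun i => zst i * (ρ : ℂ) ^ (-(k i)) with hzdef
    have hznz' : ∀ i, z i ≠ 0 := fun i => mul_ne_zero (hznz i) (zpow_ne_zero _ hρ0)
    have habsz : ∀ (m : ℤ) (r : ℝ), 0 < r → ‖(r : ℂ) ^ m‖ = r ^ m := by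
      intro m r hr
      rw [norm_zpow, Complex.norm_of_nonneg hr.le]
    have hlogz : logMap z = x := by
      funext i
      have h1 : ‖z i‖ = ‖zst i‖ * ρ ^ (-(k i)) := by
        rw [hzdef]
        simp only
        rw [norm_mul, habsz _ _ hρpos]
      have h2 : Real.log (‖zst i‖) = x i + (t * τ) * k i := by
        have := congrFun hzlog i
        exact this
      rw [logMap, h1, Real.log_mul (norm_pos_iff.mpr (hznz i)).ne'
        (by positivity), h2, Real.log_zpow, hρdef, Real.log_exp]
      push_cast
      ring
    have hxE : x ∈ connectedComponentIn (amoeba A c)ᶜ x := mem_connectedComponentIn hx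
    have hzW : z ∈ Wset A c x := ⟨hznz', by rw [hlogz]; exact hxE⟩
    have hzw : (fun i => z i * (w : ℂ) ^ (k i)) ∈ Wset A c x := by
      refine ⟨fun i => mul_ne_zero (hznz' i) (zpow_ne_zero _ hw0), ?_⟩
      have : logMap (fun i => z i * (w : ℂ) ^ (k i)) = fun i => x i + τ * k i := by
        funext i
        show Real.log (‖z i * (w : ℂ) ^ (k i)‖) = x i + τ * k i
        rw [norm_mul, Real.log_mul (norm_pos_iff.mpr (hznz' i)).ne'
          (by rw [habsz _ _ hwpos]; positivity), habsz _ _ hwpos, Real.log_zpow,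
          hwdef, Real.log_exp]
        have := congrFun hlogz i
        rw [logMap] at this
        rw [this]
        push_cast
        ring
      rw [this]
      exact hy
    have hlEz : lEval A c z ≠ 0 := lEval_ne_of_mem_U A c (Wset_subset_Uset A c x hzW)
    have hQzne : Qp A c k z ≠ 0 := Qp_ne_zero A c k hlEz
    -- ρ is a root of Qp A c k z
    have hroot : (ρ : ℂ) ∈ (Qp A c k z).roots := by
      rw [Polynomial.mem_roots hQzne]
      rw [Polynomial.IsRoot, Qp_eval A c k z hρ0]
      have hcoord : (fun i => z i * (ρ : ℂ) ^ (k i)) = zst := by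
        funext i
        show zst i * (ρ : ℂ) ^ (-(k i)) * (ρ : ℂ) ^ (k i) = zst i
        rw [mul_assoc, ← zpow_add₀ hρ0, neg_add_cancel, zpow_zero, mul_one]
      rw [hcoord, hzeval, mul_zero]
    -- counts
    have hcnteq : cnt A c k 1 z = cnt A c k 1 (fun i => z i * (w : ℂ) ^ (k i)) :=
      cnt_eq_on_preconnected A c k (Wset_subset_Uset A c x) (isPreconnected_Wset A c x)
        hzW hzw
    have hscale : cnt A c k 1 (fun i => z i * (w : ℂ) ^ (k i))
        = Multiset.card ((Qp A c k z).roots.filter fun r => ‖r‖ < w) := by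
      rw [cnt, Qp_scale_roots A c k z hlEz hw0]
      rw [Multiset.filter_map]
      rw [Multiset.card_map]
      congr 1
      refine Multiset.filter_congr fun r _ => ?_
      simp only [Function.comp_apply]
      rw [norm_div, Complex.norm_of_nonneg hwpos.le, div_lt_one hwpos]
    have hle : ((Qp A c k z).roots.filter fun r => ‖r‖ < 1)
        ≤ ((Qp A c k z).roots.filter fun r => ‖r‖ < w) := by
      refine Multiset.monotone_filter_right _ ?_
      intro r hr
      have h1w : (1 : ℝ) ≤ w := by
        rw [hwdef]
        exact Real.one_le_exp (le_trans (by positivity) httτ)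
      exact lt_of_lt_of_le hr h1w
    have hcard : Multiset.card ((Qp A c k z).roots.filter fun r => ‖r‖ < w)
        ≤ Multiset.card ((Qp A c k z).roots.filter fun r => ‖r‖ < 1) := by
      rw [← hscale, ← hcnteq]
      exact le_of_eq rfl
    have hfeq := Multiset.eq_of_le_of_card_le hle hcard
    have hmemw : (ρ : ℂ) ∈ ((Qp A c k z).roots.filter fun r => ‖r‖ < w) := by
      rw [Multiset.mem_filter]
      refine ⟨hroot, ?_⟩
      rw [Complex.norm_of_nonneg hρpos.le]
      exact Real.exp_lt_exp.mpr hlt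
    rw [← hfeq] at hmemw
    rw [Multiset.mem_filter] at hmemw
    have : (1 : ℝ) ≤ ‖(ρ : ℂ)‖ := by
      rw [Complex.norm_of_nonneg hρpos.le]
      exact Real.one_le_exp (by positivity)
    exact absurd hmemw.2 (not_lt.mpr this)

end Rational

end

section Closed

variable {n : ℕ} (A : Finset (Fin n → ℤ)) (c : (Fin n → ℤ) → ℂ)

lemma continuousAt_lEval {z : Fin n → ℂ} (hz : ∀ i, z i ≠ 0) :
    ContinuousAt (lEval A c) z := by
  have hterm : ∀ α : Fin n → ℤ, Filter.Tendsto (fun z' : Fin n → ℂ => ∏ i, z' i ^ α i)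
      (nhds z) (nhds (∏ i, z i ^ α i)) := by
    intro α
    exact tendsto_finset_prod _ fun i _ =>
      ContinuousAt.zpow₀ (continuous_apply i).continuousAt _ (Or.inl (hz i))
  have : Filter.Tendsto (fun z' : Fin n → ℂ => ∑ α ∈ A, c α * ∏ i, z' i ^ α i)
      (nhds z) (nhds (∑ α ∈ A, c α * ∏ i, z i ^ α i)) :=
    tendsto_finset_sum _ fun α _ => tendsto_const_nhds.mul (hterm α)
  exact this

set_option maxHeartbeats 1000000 in
lemma isClosed_amoeba : IsClosed (amoeba A c) := by
  refine IsSeqClosed.isClosed ?_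
  intro xs x hmem hlim
  choose zs hzs using hmem
  have habs : ∀ m i, ‖zs m i‖ = Real.exp (xs m i) := by
    intro m i
    have h1 := congrFun (hzs m).2 i
    rw [logMap] at h1
    rw [← h1, Real.exp_log (norm_pos_iff.mpr ((hzs m).1.1 i))]
  obtain ⟨M, hM⟩ := Metric.tendsto_atTop.mp hlim 1 one_pos
  set K : Set (Fin n → ℂ) := {z | ∀ i, ‖z i‖ ∈
    Set.Icc (Real.exp (x i - 1)) (Real.exp (x i + 1))} with hK
  have hKclosed : IsClosed K := by
    have : K = ⋂ i, ((fun z : Fin n → ℂ => ‖z i‖) ⁻¹'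
        (Set.Icc (Real.exp (x i - 1)) (Real.exp (x i + 1)))) := by
      ext z
      constructor
      · intro hzK
        exact Set.mem_iInter.mpr fun i => hzK i
      · intro hzK i
        exact Set.mem_iInter.mp hzK i
    rw [this]
    exact isClosed_iInter fun i =>
      IsClosed.preimage (continuous_norm.comp (continuous_apply i)) isClosed_Icc
  have hKbdd : Bornology.IsBounded K := by
    rw [isBounded_iff_forall_norm_le]
    refine ⟨‖(fun i => Real.exp (x i + 1) : Fin n → ℝ)‖, fun z hzK => ?_⟩
    refine pi_norm_le_iff_of_nonneg (norm_nonneg _) |>.mpr fun i => ?_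
    have h1 : ‖z i‖ ≤ Real.exp (x i + 1) := (hzK i).2
    refine le_trans h1 ?_
    have h2 := norm_le_pi_norm (fun i => Real.exp (x i + 1) : Fin n → ℝ) i
    rw [Real.norm_eq_abs, abs_of_pos (Real.exp_pos _)] at h2
    exact h2
  have hKcompact : IsCompact K := Metric.isCompact_of_isClosed_isBounded hKclosed hKbdd
  have hmemK : ∀ m, zs (m + M) ∈ K := by
    intro m i
    have hd : dist (xs (m + M)) x < 1 := hM (m + M) (Nat.le_add_left M m)
    have hdi : dist (xs (m + M) i) (x i) < 1 := lt_of_le_of_lt (dist_le_pi_dist _ _ i) hd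
    rw [Real.dist_eq, abs_sub_lt_iff] at hdi
    rw [habs, Set.mem_Icc]
    constructor
    · exact Real.exp_le_exp.mpr (by linarith)
    · exact Real.exp_le_exp.mpr (by linarith)
  obtain ⟨zlim, hzlimK, φ, hφ, hφtend⟩ := hKcompact.tendsto_subseq hmemK
  have hzlimne : ∀ i, zlim i ≠ 0 := by
    intro i h0
    have := (hzlimK i).1
    rw [h0] at this
    simp only [norm_zero] at this
    exact absurd this (not_le.mpr (Real.exp_pos _))
  have hshift : Filter.Tendsto (fun m => φ m + M) Filter.atTop Filter.atTop :=
    Filter.tendsto_atTop_mono (fun m => le_trans (hφ.id_le m) (Nat.le_add_right _ _))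
      Filter.tendsto_id
  have habslim : ∀ i, ‖zlim i‖ = Real.exp (x i) := by
    intro i
    have h1a : Filter.Tendsto (fun m => zs (φ m + M)) Filter.atTop (nhds zlim) := hφtend
    have h1b : Filter.Tendsto (fun v : Fin n → ℂ => ‖v i‖) (nhds zlim)
        (nhds (‖zlim i‖)) :=
      (continuous_norm.comp (continuous_apply i)).continuousAt
    have h1 : Filter.Tendsto (fun m => ‖zs (φ m + M) i‖) Filter.atTop
        (nhds (‖zlim i‖)) := h1b.comp h1a
    have h2 : (fun m => ‖zs (φ m + M) i‖)
        = fun m => Real.exp (xs (φ m + M) i) := by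
      funext m; exact habs _ i
    rw [h2] at h1
    have h3 : Filter.Tendsto (fun m => Real.exp (xs (φ m + M) i)) Filter.atTop
        (nhds (Real.exp (x i))) := by
      refine Real.continuous_exp.continuousAt.tendsto.comp ?_
      exact ((continuous_apply i).continuousAt.tendsto).comp (hlim.comp hshift)
    exact tendsto_nhds_unique h1 h3
  have hleval : lEval A c zlim = 0 := by
    have h1a : Filter.Tendsto (fun m => zs (φ m + M)) Filter.atTop (nhds zlim) := hφtend
    have h1 : Filter.Tendsto (fun m => lEval A c (zs (φ m + M))) Filter.atTop
        (nhds (lEval A c zlim)) := Filter.Tendsto.comp (g := lEval A c)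
          (f := fun m => zs (φ m + M)) (continuousAt_lEval A c hzlimne) h1a
    have h2 : (fun m => lEval A c (zs (φ m + M))) = fun _ => (0 : ℂ) := by
      funext m; exact (hzs (φ m + M)).1.2
    rw [h2] at h1
    exact tendsto_nhds_unique h1 tendsto_const_nhds
  refine ⟨zlim, ⟨hzlimne, hleval⟩, ?_⟩
  funext i
  rw [logMap, habslim i, Real.log_exp]

end Closed

theorem amoeba_component_convex {n : ℕ} (A : Finset (Fin n → ℤ)) (c : (Fin n → ℤ) → ℂ)
    (u : Fin n → ℝ) :
    Convex ℝ (connectedComponentIn (amoeba A c)ᶜ u) := by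
  set S := (amoeba A c)ᶜ with hS
  have hSopen : IsOpen S := (isClosed_amoeba A c).isOpen_compl
  set E := connectedComponentIn S u with hE
  have hEopen : IsOpen E := hSopen.connectedComponentIn
  intro x hx y hy t1 t2 ht1 ht2 hsum
  rcases eq_or_lt_of_le ht1 with h10 | h1pos
  · have : t2 = 1 := by linarith
    rw [← h10, this]
    simpa using hy
  rcases eq_or_lt_of_le ht2 with h20 | h2pos
  · have : t1 = 1 := by linarith
    rw [← h20, this]
    simpa using hx
  obtain ⟨ε, hεpos, hballx⟩ := Metric.isOpen_iff.mp hEopen x hx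
  obtain ⟨ε', hε'pos, hbally⟩ := Metric.isOpen_iff.mp hEopen y hy
  set εm : ℝ := min ε ε' with hεm
  have hεmpos : 0 < εm := lt_min hεpos hε'pos
  obtain ⟨N, hNpos, hNlt⟩ : ∃ N : ℕ, 0 < N ∧ 1 / (N : ℝ) < εm := by
    obtain ⟨N, hN⟩ := exists_nat_one_div_lt hεmpos
    refine ⟨N + 1, Nat.succ_pos N, ?_⟩
    push_cast
    exact hN
  set d : Fin n → ℝ := fun i => y i - x i with hd
  set k : Fin n → ℤ := fun i => round ((N : ℝ) * d i) with hk
  set τ : ℝ := 1 / N with hτ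
  have hτpos : 0 < τ := by positivity
  set v : Fin n → ℝ := fun i => τ * k i with hv
  have hvd : ∀ i, |v i - d i| ≤ 1 / (2 * N) := by
    intro i
    have h1 : |((round ((N : ℝ) * d i) : ℝ)) - (N : ℝ) * d i| ≤ 1 / 2 := by
      rw [abs_sub_comm]
      exact abs_sub_round _
    have hN0 : (N : ℝ) ≠ 0 := by positivity
    have : v i - d i = (((round ((N : ℝ) * d i) : ℝ)) - (N : ℝ) * d i) / N := by
      rw [hv, hτ]
      field_simp
      rfl
    rw [this, abs_div, abs_of_pos (by positivity : (0:ℝ) < (N:ℝ))]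
    rw [div_le_div_iff₀ (by positivity) (by positivity)]
    nlinarith [abs_nonneg (((round ((N : ℝ) * d i) : ℝ)) - (N : ℝ) * d i)]
  have hvdnorm : ∀ i, |v i - d i| < εm := by
    intro i
    refine lt_of_le_of_lt (hvd i) (lt_of_le_of_lt ?_ hNlt)
    rw [div_le_div_iff₀ (by positivity) (by positivity)]
    have hN1 : (1 : ℝ) ≤ (N : ℝ) := by exact_mod_cast hNpos
    nlinarith
  set w : Fin n → ℝ := t1 • x + t2 • y with hw
  set x' : Fin n → ℝ := w - t2 • v with hx'
  set y' : Fin n → ℝ := w + t1 • v with hy'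
  have hx'E : x' ∈ E := by
    refine hballx ?_
    rw [Metric.mem_ball]
    have h1 : ∀ i, x' i - x i = t2 * (d i - v i) := by
      intro i
      simp only [hx', hw, hd, Pi.sub_apply, Pi.add_apply, Pi.smul_apply, smul_eq_mul]
      have : t1 = 1 - t2 := by linarith
      rw [this]; ring
    have h2 : dist x' x < εm := by
      rw [dist_pi_lt_iff hεmpos]
      intro i
      rw [Real.dist_eq, h1 i, abs_mul, abs_of_pos h2pos]
      calc t2 * |d i - v i| ≤ 1 * |d i - v i| := by
            refine mul_le_mul_of_nonneg_right (by linarith) (abs_nonneg _)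
        _ = |d i - v i| := one_mul _
        _ = |v i - d i| := abs_sub_comm _ _
        _ < εm := hvdnorm i
    exact lt_of_lt_of_le h2 (min_le_left _ _)
  have hy'E : y' ∈ E := by
    refine hbally ?_
    rw [Metric.mem_ball]
    have h1 : ∀ i, y' i - y i = t1 * (v i - d i) := by
      intro i
      simp only [hy', hw, hd, Pi.sub_apply, Pi.add_apply, Pi.smul_apply, smul_eq_mul]
      have : t2 = 1 - t1 := by linarith
      rw [this]; ring
    have h2 : dist y' y < εm := by
      rw [dist_pi_lt_iff hεmpos]
      intro i
      rw [Real.dist_eq, h1 i, abs_mul, abs_of_pos h1pos]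
      calc t1 * |v i - d i| ≤ 1 * |v i - d i| := by
            refine mul_le_mul_of_nonneg_right (by linarith) (abs_nonneg _)
        _ = |v i - d i| := one_mul _
        _ < εm := hvdnorm i
    exact lt_of_lt_of_le h2 (min_le_right _ _)
  -- the rational segment from x' to y'
  have hx'S : x' ∈ S := connectedComponentIn_subset _ _ hx'E
  have hEeq : connectedComponentIn S x' = E := (connectedComponentIn_eq hx'E).symm
  have hy'cc : (fun i => x' i + τ * k i) ∈ connectedComponentIn S x' := by
    have : (fun i => x' i + τ * k i) = y' := by
      funext i
      simp only [hy', hx', hv, Pi.add_apply, Pi.sub_apply, Pi.smul_apply, smul_eq_mul]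
      have : t1 = 1 - t2 := by linarith
      rw [this]; ring
    rw [this, hEeq]
    exact hy'E
  have hseg : ∀ t : ℝ, 0 ≤ t → t ≤ 1 → (fun i => x' i + (t * τ) * k i) ∈ S :=
    fun t h0 h1 => ratSeg A c x' hx'S k τ hτpos.le hy'cc t h0 h1
  set seg : Set (Fin n → ℝ) := (fun t : ℝ => fun i => x' i + (t * τ) * k i) '' Set.Icc 0 1
    with hsegdef
  have hsegS : seg ⊆ S := by
    rintro p ⟨t, ⟨h0, h1⟩, rfl⟩
    exact hseg t h0 h1
  have hsegconn : IsPreconnected seg := by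
    refine IsPreconnected.image isPreconnected_Icc _ ?_
    refine Continuous.continuousOn ?_
    refine continuous_pi fun i => ?_
    exact continuous_const.add ((continuous_id.mul continuous_const).mul continuous_const)
  have hx'seg : x' ∈ seg := by
    refine ⟨0, ⟨le_refl _, zero_le_one⟩, ?_⟩
    funext i; simp
  have hsub := IsPreconnected.subset_connectedComponentIn hsegconn hx'seg hsegS
  rw [hEeq] at hsub
  refine hsub ?_
  refine ⟨t2, ⟨h2pos.le, by linarith⟩, ?_⟩
  funext i
  simp only [hx', hw, hv, Pi.add_apply, Pi.sub_apply, Pi.smul_apply, smul_eq_mul]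
  ring

/-- Every connected component of the complement of the amoeba of a Laurent
polynomial is a convex subset of `ℝⁿ`. -/
theorem stmt_0 {n : ℕ} (A : Finset (Fin n → ℤ)) (c : (Fin n → ℤ) → ℂ)
    (hA : A.Nonempty) (hc : ∀ α ∈ A, c α ≠ 0)
    (u : Fin n → ℝ) (hu : u ∈ (amoeba A c)ᶜ) :
    Convex ℝ (connectedComponentIn (amoeba A c)ᶜ u) := by
  exact amoeba_component_convex A c u
end

section
/- For every point u in the amoeba complement ℝ^n ∖ 𝒜_p, each component ν_j(u) of the order vector is a (real) integer, i.e., ν(u) ∈ ℤ^n. -/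
open MeasureTheory Real

/-!
Write `θ = (t, y)` with `t = θ_j`. For fixed `y`, `t ↦ p(e^{u + iθ})` is a nowhere vanishing
trigonometric polynomial `F` of period `2π`, and the `t`-integral of the integrand of `ν_j(u)` is
`(1/i) ∫ F'/F`, which is `2π` times an integer (the winding number of `F` around `0`). Being
continuous in `y ∈ ℝ^{n-1}`, this integer is constant, and Fubini gives `ν_j(u)` equal to it.
-/

open Complex

theorem exists_intervalIntegral_div_eq_two_pi_I_mul_int {F F' : ℝ → ℂ} {a b : ℝ}
    (hF : ∀ t, HasDerivAt F (F' t) t) (hF' : Continuous F') (hne : ∀ t, F t ≠ 0)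
    (hab : F b = F a) :
    ∃ m : ℤ, ∫ t in a..b, F' t / F t = 2 * π * I * m := by
  set L : ℝ → ℂ := fun s => ∫ t in a..s, F' t / F t
  have hQ : Continuous fun t => F' t / F t :=
    hF'.div (continuous_iff_continuousAt.2 fun t => (hF t).continuousAt) hne
  have hL (s : ℝ) : HasDerivAt L (F' s / F s) s :=
    intervalIntegral.integral_hasDerivAt_right (hQ.intervalIntegrable a s)
      hQ.stronglyMeasurable.stronglyMeasurableAtFilter hQ.continuousAt
  -- `F * exp (-L)` is constant, so `exp (L b) = F b / F a = 1`.
  have hG (s : ℝ) : HasDerivAt (fun s => F s * exp (-L s)) 0 s := by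
    refine ((hF s).mul (hL s).neg.cexp).congr_deriv ?_
    field_simp [hne s]
    ring
  have hconst := is_const_of_deriv_eq_zero (fun s => (hG s).differentiableAt)
    (fun s => (hG s).deriv) b a
  have hLa : L a = 0 := intervalIntegral.integral_same
  rw [hLa, hab, neg_zero, Complex.exp_zero, mul_one, mul_eq_left₀ (hne a)] at hconst
  obtain ⟨m, hm⟩ := exp_eq_one_iff.1 hconst
  refine ⟨-m, ?_⟩
  change L b = _
  rw [← neg_neg (L b), hm]
  push_cast
  ring

theorem exists_intervalIntegral_expSum_div_eq_two_pi_mul_int {ι : Type*} (s : Finset ι)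
    (d : ι → ℂ) (k : ι → ℤ) (hne : ∀ t : ℝ, ∑ α ∈ s, d α * exp (k α * t * I) ≠ 0) :
    ∃ m : ℤ, ∫ t in (0)..(2 * π),
      (∑ α ∈ s, d α * k α * exp (k α * t * I)) / ∑ α ∈ s, d α * exp (k α * t * I)
        = 2 * π * m := by
  have hderiv (t : ℝ) : HasDerivAt (fun t : ℝ => ∑ α ∈ s, d α * exp (k α * t * I))
      (I * ∑ α ∈ s, d α * k α * exp (k α * t * I)) t := by
    rw [Finset.mul_sum]
    refine HasDerivAt.fun_sum fun α _ => ?_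
    refine ((((hasDerivAt_id (t : ℂ)).comp_ofReal.const_mul (k α : ℂ)).mul_const I).cexp.const_mul
      (d α)).congr_deriv ?_
    simp only [id]
    ring
  have hperiod : ∑ α ∈ s, d α * exp (k α * ↑(2 * π) * I) =
      ∑ α ∈ s, d α * exp (k α * ↑(0 : ℝ) * I) := by
    refine Finset.sum_congr rfl fun α _ => ?_
    rw [show (k α : ℂ) * ↑(2 * π) * I = k α * (2 * π * I) by push_cast; ring,
      exp_int_mul_two_pi_mul_I]
    simp
  obtain ⟨m, hm⟩ :=
    exists_intervalIntegral_div_eq_two_pi_I_mul_int hderiv (by fun_prop) hne hperiod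
  refine ⟨m, mul_left_cancel₀ I_ne_zero ?_⟩
  rw [← intervalIntegral.integral_const_mul]
  simp only [mul_div_assoc] at hm ⊢
  rw [hm]
  ring

theorem Continuous.exists_forall_eq_intCast {X : Type*} [TopologicalSpace X]
    [PreconnectedSpace X] [Nonempty X] {g : X → ℂ} (hg : Continuous g)
    (hint : ∀ x, ∃ m : ℤ, g x = m) :
    ∃ m : ℤ, ∀ x, g x = m := by
  obtain ⟨x₀⟩ := ‹Nonempty X›
  obtain ⟨m, hm⟩ := hint x₀
  refine ⟨m, fun x => hm ▸ ?_⟩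
  exact isPreconnected_univ.constant_of_mapsTo Complex.isometry_intCast.isEmbedding.isDiscrete_range
    hg.continuousOn (fun x _ => (hint x).imp fun m hm => hm.symm) trivial trivial

theorem measureReal_cube (n : ℕ) : volume.real (cube n) = (2 * π) ^ n := by
  rw [cube, measureReal_def, volume_pi, Measure.pi_pi]
  simp [Real.pi_pos.le]

theorem setIntegral_cube_succAbove {E : Type*} [NormedAddCommGroup E] [NormedSpace ℝ E] {n : ℕ}
    {f : (Fin (n + 1) → ℝ) → E} (hf : IntegrableOn f (cube (n + 1))) (j : Fin (n + 1)) :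
    ∫ θ in cube (n + 1), f θ = ∫ y in cube n, ∫ t in (0)..(2 * π), f (j.insertNth t y) := by
  set e : ℝ × (Fin n → ℝ) ≃ᵐ (Fin (n + 1) → ℝ) :=
    (MeasurableEquiv.piFinSuccAbove (fun _ => ℝ) j).symm
  have he : MeasurePreserving e :=
    (volume_preserving_piFinSuccAbove (fun _ : Fin (n + 1) => ℝ) j).symm _
  have hcube : e ⁻¹' cube (n + 1) = Set.Icc 0 (2 * π) ×ˢ cube n := by
    simp only [cube, Set.pi_univ_Icc]
    exact ((Fin.insertNthOrderIso (fun _ => ℝ) j).preimage_Icc _ _).trans (Set.Icc_prod_eq _ _)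
  have hfe : Integrable (f ∘ e) ((volume.restrict (Set.Icc 0 (2 * π))).prod
      (volume.restrict (cube n))) := by
    rw [Measure.prod_restrict, ← Measure.volume_eq_prod, ← hcube]
    exact (he.integrableOn_comp_preimage e.measurableEmbedding).2 hf
  rw [← he.map_eq, setIntegral_map_equiv, hcube, Measure.volume_eq_prod, ← Measure.prod_restrict,
    integral_prod_symm (fun p => f (e p)) hfe]
  refine setIntegral_congr_fun (MeasurableSet.univ_pi fun _ => measurableSet_Icc) fun y _ => ?_
  rw [intervalIntegral.integral_of_le Real.two_pi_pos.le, integral_Icc_eq_integral_Ioc]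
  rfl

/-- `z_j (∂p/∂z_j)(z) / p(z)` at `z = e^{u + iθ}`, the integrand of `order`. -/
noncomputable def orderIntegrand {n : ℕ} (A : Finset (Fin n → ℤ)) (c : (Fin n → ℤ) → ℂ)
    (u : Fin n → ℝ) (j : Fin n) (θ : Fin n → ℝ) : ℂ :=
  (∑ α ∈ A, c α * (α j : ℂ) * ∏ i, tPt u θ i ^ α i) / lEval A c (tPt u θ)

section orderIntegrand

variable {n : ℕ} {A : Finset (Fin n → ℤ)} {c : (Fin n → ℤ) → ℂ} {u : Fin n → ℝ}

theorem order_eq_integral_orderIntegrand (j : Fin n) :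
    order A c u j = (((2 * π) ^ n : ℝ) : ℂ)⁻¹ * ∫ θ in cube n, orderIntegrand A c u j θ :=
  rfl

theorem lEval_tPt_ne_zero (hu : u ∉ amoeba A c) (θ : Fin n → ℝ) : lEval A c (tPt u θ) ≠ 0 := by
  intro h0
  refine hu ⟨tPt u θ, ⟨fun i => exp_ne_zero _, h0⟩, ?_⟩
  funext i
  simp [logMap, tPt, norm_exp]

theorem continuous_prod_tPt_zpow (u : Fin n → ℝ) (α : Fin n → ℤ) :
    Continuous fun θ => ∏ i, tPt u θ i ^ α i := by
  refine continuous_finsetProd _ fun i _ => ?_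
  exact (by unfold tPt; fun_prop : Continuous fun θ => tPt u θ i).zpow₀ (α i)
    fun θ => Or.inl (exp_ne_zero _)

theorem continuous_orderIntegrand (hu : u ∉ amoeba A c) (j : Fin n) :
    Continuous (orderIntegrand A c u j) := by
  have := continuous_prod_tPt_zpow u
  exact Continuous.div (by fun_prop) (by unfold lEval; fun_prop) (lEval_tPt_ne_zero hu)

end orderIntegrand

theorem prod_tPt_insertNth_zpow {n : ℕ} (u : Fin (n + 1) → ℝ) (j : Fin (n + 1)) (t : ℝ)
    (y : Fin n → ℝ) (α : Fin (n + 1) → ℤ) :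
    ∏ i, tPt u (j.insertNth t y) i ^ α i =
      (∏ i, tPt u (j.insertNth 0 y) i ^ α i) * exp (α j * t * I) := by
  simp only [Fin.prod_univ_succAbove _ j, Fin.insertNth_apply_same, Fin.insertNth_apply_succAbove,
    tPt, ← exp_int_mul]
  push_cast
  rw [mul_right_comm _ _ (cexp _), ← Complex.exp_add]
  ring_nf

theorem exists_intervalIntegral_orderIntegrand_insertNth_eq_two_pi_mul_int {n : ℕ}
    {A : Finset (Fin (n + 1) → ℤ)} {c : (Fin (n + 1) → ℤ) → ℂ} {u : Fin (n + 1) → ℝ}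
    (hu : u ∉ amoeba A c) (j : Fin (n + 1)) (y : Fin n → ℝ) :
    ∃ m : ℤ, ∫ t in (0)..(2 * π), orderIntegrand A c u j (j.insertNth t y) = 2 * π * m := by
  set d : (Fin (n + 1) → ℤ) → ℂ := fun α => c α * ∏ i, tPt u (j.insertNth 0 y) i ^ α i
  have hden (t : ℝ) : lEval A c (tPt u (j.insertNth t y)) =
      ∑ α ∈ A, d α * exp (α j * t * I) := by
    refine Finset.sum_congr rfl fun α _ => ?_
    rw [prod_tPt_insertNth_zpow, ← mul_assoc]
  have hquot (t : ℝ) : orderIntegrand A c u j (j.insertNth t y) =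
      (∑ α ∈ A, d α * α j * exp (α j * t * I)) / ∑ α ∈ A, d α * exp (α j * t * I) := by
    rw [orderIntegrand, hden]
    congr 1
    refine Finset.sum_congr rfl fun α _ => ?_
    rw [prod_tPt_insertNth_zpow]
    ring
  simp only [hquot]
  exact exists_intervalIntegral_expSum_div_eq_two_pi_mul_int A d (fun α => α j)
    fun t => hden t ▸ lEval_tPt_ne_zero hu _

theorem stmt_7_general {n : ℕ} (A : Finset (Fin n → ℤ)) (c : (Fin n → ℤ) → ℂ)
    (u : Fin n → ℝ) (hu : u ∉ amoeba A c) (j : Fin n) :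
    ∃ m : ℤ, order A c u j = (m : ℂ) := by
  cases n with
  | zero => exact j.elim0
  | succ n =>
  have hf := continuous_orderIntegrand hu j
  obtain ⟨m, hm⟩ : ∃ m : ℤ, ∀ y : Fin n → ℝ,
      (2 * π : ℂ)⁻¹ * ∫ t in (0)..(2 * π), orderIntegrand A c u j (j.insertNth t y) = m :=
    Continuous.exists_forall_eq_intCast (by fun_prop) fun y =>
      (exists_intervalIntegral_orderIntegrand_insertNth_eq_two_pi_mul_int hu j y).imp
        fun m hm => by rw [hm]; field_simp
  have hslice (y : Fin n → ℝ) :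
      ∫ t in (0)..(2 * π), orderIntegrand A c u j (j.insertNth t y) = 2 * π * m := by
    rw [← hm y]
    field_simp
  refine ⟨m, ?_⟩
  rw [order_eq_integral_orderIntegrand, setIntegral_cube_succAbove
    (hf.continuousOn.integrableOn_compact (isCompact_univ_pi fun _ => isCompact_Icc)) j,
    funext hslice, setIntegral_const, measureReal_cube, Complex.real_smul]
  push_cast
  field_simp
  ring

/-- For every point `u` of the amoeba complement, each component of the order
vector `ν(u)` is a (real) integer. -/
theorem stmt_7 {n : ℕ} (A : Finset (Fin n → ℤ)) (c : (Fin n → ℤ) → ℂ)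
    (hA : A.Nonempty) (hc : ∀ α ∈ A, c α ≠ 0)
    (u : Fin n → ℝ) (hu : u ∉ amoeba A c) (j : Fin n) :
    ∃ m : ℤ, order A c u j = (m : ℂ) :=
  stmt_7_general A c u hu j
end

section
/- The amoeba 𝒜_p of a Laurent polynomial p is a closed subset of ℝ^n. -/
open MeasureTheory Real

/-
Every point of the torus `(ℂ*)ⁿ` is `(e^{u₁} w₁, …, e^{uₙ} wₙ)` with `u = Log z` and `w` in the
compact group `(S¹)ⁿ`. Hence the amoeba is the projection to `ℝⁿ` of the closed zero set of
`(u, w) ↦ p(e^u w)` in `ℝⁿ × (S¹)ⁿ`, and projecting away a compact factor is a closed map.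
-/

noncomputable def polarPoint {n : ℕ} (u : Fin n → ℝ) (w : Fin n → Circle) : Fin n → ℂ :=
  fun i => Complex.exp (u i) * w i

lemma polarPoint_ne_zero {n : ℕ} (u : Fin n → ℝ) (w : Fin n → Circle) (i : Fin n) :
    polarPoint u w i ≠ 0 :=
  mul_ne_zero (Complex.exp_ne_zero _) (Circle.coe_ne_zero _)

lemma logMap_polarPoint {n : ℕ} (u : Fin n → ℝ) (w : Fin n → Circle) :
    logMap (polarPoint u w) = u := by
  funext i
  simp [logMap, polarPoint, Complex.norm_exp, Circle.norm_coe]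

lemma polarPoint_logMap_exp_arg {n : ℕ} {z : Fin n → ℂ} (hz : ∀ i, z i ≠ 0) :
    polarPoint (logMap z) (fun i => Circle.exp (z i).arg) = z := by
  funext i
  have hnorm : (0 : ℝ) < ‖z i‖ := norm_pos_iff.mpr (hz i)
  simp only [polarPoint, logMap, Circle.coe_exp, ← Complex.ofReal_exp, Real.exp_log hnorm]
  exact Complex.norm_mul_exp_arg_mul_I (z i)

lemma amoeba_eq_image_fst {n : ℕ} (A : Finset (Fin n → ℤ)) (c : (Fin n → ℤ) → ℂ) :
    amoeba A c = Prod.fst '' {p : (Fin n → ℝ) × (Fin n → Circle) |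
      lEval A c (polarPoint p.1 p.2) = 0} := by
  ext u
  constructor
  · rintro ⟨z, ⟨hz, hz0⟩, rfl⟩
    refine ⟨(logMap z, fun i => Circle.exp (z i).arg), ?_, rfl⟩
    simpa only [Set.mem_ofPred_eq, polarPoint_logMap_exp_arg hz] using hz0
  · rintro ⟨⟨u, w⟩, hzero, rfl⟩
    exact ⟨polarPoint u w, ⟨polarPoint_ne_zero u w, hzero⟩, logMap_polarPoint u w⟩

lemma Continuous.lEval {X : Type*} [TopologicalSpace X] {n : ℕ} (A : Finset (Fin n → ℤ))
    (c : (Fin n → ℤ) → ℂ) {f : X → Fin n → ℂ} (hf : Continuous f) (hf0 : ∀ x i, f x i ≠ 0) :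
    Continuous fun x => lEval A c (f x) :=
  continuous_finsetSum _ fun α _ => continuous_const.mul <| continuous_finsetProd _ fun i _ =>
    ((continuous_apply i).comp hf).zpow₀ (α i) fun x => Or.inl (hf0 x i)

lemma continuous_polarPoint {n : ℕ} :
    Continuous fun p : (Fin n → ℝ) × (Fin n → Circle) => polarPoint p.1 p.2 := by
  unfold polarPoint
  fun_prop

theorem stmt_11_general {n : ℕ} (A : Finset (Fin n → ℤ)) (c : (Fin n → ℤ) → ℂ) :
    IsClosed (amoeba A c) := by
  rw [amoeba_eq_image_fst]
  exact isClosedMap_fst_of_compactSpace _ <| isClosed_eq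
    (continuous_polarPoint.lEval A c fun p => polarPoint_ne_zero p.1 p.2) continuous_const

/-- The amoeba of a Laurent polynomial is a closed subset of `ℝⁿ`. -/
theorem stmt_11 {n : ℕ} (A : Finset (Fin n → ℤ)) (c : (Fin n → ℤ) → ℂ)
    (hA : A.Nonempty) (hc : ∀ α ∈ A, c α ≠ 0) :
    IsClosed (amoeba A c) :=
  stmt_11_general A c
end

section
/- Lopsidedness criterion: if x ∈ ℝ^n is such that there exists β ∈ A with |c_β| e^{⟨β,x⟩} > ∑_{α∈A, α≠β} |c_α| e^{⟨α,x⟩}, then x does not belong to the amoeba 𝒜_p. -/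
open MeasureTheory Real

/-!
At a point `z` of the torus, `|c_α z^α| = |c_α| e^{⟨α, Log z⟩}`. If `p(z) = 0`, the term of index `β`
is minus the sum of the others, so by the triangle inequality it cannot dominate them in modulus.
-/

lemma norm_le_sum_norm_erase_of_sum_eq_zero {ι E : Type*} [SeminormedAddCommGroup E]
    [DecidableEq ι] {s : Finset ι} {f : ι → E} (hf : ∑ i ∈ s, f i = 0) {b : ι} (hb : b ∈ s) :
    ‖f b‖ ≤ ∑ i ∈ s.erase b, ‖f i‖ := by
  rw [← Finset.add_sum_erase s f hb, add_eq_zero_iff_eq_neg] at hf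
  rw [hf, norm_neg]
  exact norm_sum_le _ _

lemma norm_prod_zpow_eq_exp {ι 𝕜 : Type*} [Fintype ι] [NormedField 𝕜] {z : ι → 𝕜}
    (hz : ∀ i, z i ≠ 0) (α : ι → ℤ) :
    ‖∏ i, z i ^ α i‖ = Real.exp (∑ i, (α i : ℝ) * Real.log ‖z i‖) := by
  rw [norm_prod, Real.exp_sum]
  refine Finset.prod_congr rfl fun i _ => ?_
  rw [norm_zpow, ← Real.rpow_intCast, Real.rpow_def_of_pos (norm_pos_iff.mpr (hz i)), mul_comm]

theorem stmt_12_general {n : ℕ} (A : Finset (Fin n → ℤ)) (c : (Fin n → ℤ) → ℂ)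
    (x : Fin n → ℝ) (β : Fin n → ℤ) (hβ : β ∈ A)
    (h : ∑ α ∈ A.erase β, ‖c α‖ * Real.exp (∑ i, (α i : ℝ) * x i) <
         ‖c β‖ * Real.exp (∑ i, (β i : ℝ) * x i)) :
    x ∉ amoeba A c := by
  rintro ⟨z, ⟨hz, hpz⟩, rfl⟩
  have hterm (α : Fin n → ℤ) :
      ‖c α * ∏ i, z i ^ α i‖ = ‖c α‖ * Real.exp (∑ i, (α i : ℝ) * logMap z i) := by
    rw [norm_mul, norm_prod_zpow_eq_exp hz]
    rfl
  have hdom := norm_le_sum_norm_erase_of_sum_eq_zero hpz hβ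
  simp only [hterm] at hdom
  exact hdom.not_gt h

/-- Lopsidedness criterion: if at `x ∈ ℝⁿ` some monomial of `p` dominates the
sum of the absolute values of all the others, then `x` is not in the amoeba. -/
theorem stmt_12 {n : ℕ} (A : Finset (Fin n → ℤ)) (c : (Fin n → ℤ) → ℂ)
    (hA : A.Nonempty) (hc : ∀ α ∈ A, c α ≠ 0)
    (x : Fin n → ℝ) (β : Fin n → ℤ) (hβ : β ∈ A)
    (h : ∑ α ∈ A.erase β, ‖c α‖ * Real.exp (∑ i, (α i : ℝ) * x i) <
         ‖c β‖ * Real.exp (∑ i, (β i : ℝ) * x i)) :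
    x ∉ amoeba A c :=
  stmt_12_general A c x β hβ h
end

section
/- In the one-dimensional case the amoeba is bounded; precisely, for a nonzero univariate Laurent polynomial p, the amoeba 𝒜_p ⊂ ℝ is a finite set of points. In contrast, for n ≥ 2, if the support A of p contains at least two distinct points, then the amoeba 𝒜_p is a nonempty unbounded subset of ℝ^n. -/
open MeasureTheory Real

/-!
For `n = 1`, multiplying `p` by a power of `z` turns it into a nonzero polynomial, which has
finitely many roots.

For `n ≥ 2`, pick `d ∈ ℤⁿ` on which the exponents `α ⬝ᵥ d`, `α ∈ A`, are pairwise distinct.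
Along the curve `z = exp (x + d ζ)`, `p` becomes a Laurent polynomial in `w = exp ζ` with at
least two monomials, which has a root in `ℂ*` by the fundamental theorem of algebra. So the
amoeba meets every line `x + ℝ d`, and a nonzero linear functional vanishing on `d` maps it
onto `ℝ`.
-/

open Polynomial Bornology

section LaurentSum

variable {ι K : Type*} [Field K] {s : Finset ι} {b : ι → K} {e : ι → ℤ}

variable (s b e) in
/-- `w ^ (-m) * ∑ b a * w ^ e a` as a polynomial in `w`; `toNat` only truncates when `e a < m`. -/
noncomputable def shiftedPoly (m : ℤ) : K[X] :=
  ∑ a ∈ s, monomial (e a - m).toNat (b a)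

theorem coeff_shiftedPoly {m : ℤ} (hm : ∀ a ∈ s, m ≤ e a) (he : Set.InjOn e s) {a : ι}
    (ha : a ∈ s) : (shiftedPoly s b e m).coeff (e a - m).toNat = b a := by
  rw [shiftedPoly, finsetSum_coeff, Finset.sum_eq_single_of_mem a ha]
  · simp
  · intro a' ha' hne
    rw [coeff_monomial, if_neg]
    have := hm a ha
    have := hm a' ha'
    exact fun h => hne (he ha' ha (by omega))

theorem zpow_mul_eval_shiftedPoly {m : ℤ} (hm : ∀ a ∈ s, m ≤ e a) {w : K} (hw : w ≠ 0) :
    w ^ m * (shiftedPoly s b e m).eval w = ∑ a ∈ s, b a * w ^ e a := by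
  rw [shiftedPoly, eval_finsetSum, Finset.mul_sum]
  refine Finset.sum_congr rfl fun a ha => ?_
  rw [eval_monomial, ← zpow_natCast, Int.toNat_of_nonneg (sub_nonneg.2 (hm a ha)),
    mul_left_comm, ← zpow_add₀ hw, add_sub_cancel]

theorem finite_setOf_sum_mul_zpow_eq_zero (hs : s.Nonempty) (hb : ∀ a ∈ s, b a ≠ 0)
    (he : Set.InjOn e s) : {w : K | w ≠ 0 ∧ ∑ a ∈ s, b a * w ^ e a = 0}.Finite := by
  obtain ⟨a, ha⟩ := hs
  have hm : ∀ a' ∈ s, s.inf' ⟨a, ha⟩ e ≤ e a' := fun a' ha' => s.inf'_le e ha'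
  have hP : shiftedPoly s b e (s.inf' ⟨a, ha⟩ e) ≠ 0 := fun h =>
    hb a ha (by rw [← coeff_shiftedPoly (b := b) hm he ha, h, coeff_zero])
  refine (finite_setOfPred_isRoot hP).subset fun w ⟨hw, hsum⟩ => ?_
  rw [← zpow_mul_eval_shiftedPoly hm hw] at hsum
  exact (mul_eq_zero.1 hsum).resolve_left (zpow_ne_zero _ hw)

theorem exists_sum_mul_zpow_eq_zero [IsAlgClosed K] (hb : ∀ a ∈ s, b a ≠ 0)
    (he : Set.InjOn e s) (hs : 1 < s.card) : ∃ w ≠ 0, ∑ a ∈ s, b a * w ^ e a = 0 := by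
  obtain ⟨a₀, ha₀, hmin⟩ := s.exists_min_image e (Finset.card_pos.1 (by omega))
  obtain ⟨a₁, ha₁, hne⟩ := s.exists_mem_ne hs a₀
  let P := shiftedPoly s b e (e a₀)
  have hP₀ : P.coeff 0 ≠ 0 := by
    simpa using (coeff_shiftedPoly hmin he ha₀).trans_ne (hb a₀ ha₀)
  have hdeg : P.degree ≠ 0 := by
    have hk : (e a₁ - e a₀).toNat ≠ 0 := by
      have := he.ne ha₁ ha₀ hne
      have := hmin a₁ ha₁
      omega
    intro h
    have : P.coeff (e a₁ - e a₀).toNat = b a₁ := coeff_shiftedPoly hmin he ha₁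
    rw [eq_C_of_degree_eq_zero h, coeff_C, if_neg hk] at this
    exact hb a₁ ha₁ this.symm
  obtain ⟨w, hw⟩ := IsAlgClosed.exists_root P hdeg
  have hw₀ : w ≠ 0 := by
    rintro rfl
    exact hP₀ (by rwa [coeff_zero_eq_eval_zero])
  exact ⟨w, hw₀, by rw [← zpow_mul_eval_shiftedPoly hmin hw₀, hw.eq_zero, mul_zero]⟩

end LaurentSum

theorem exists_injOn_dotProduct {R : Type*} [CommRing R] [IsDomain R] [Infinite R] {n : ℕ}
    (A : Finset (Fin n → R)) : ∃ d : Fin n → R, Set.InjOn (· ⬝ᵥ d) A := by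
  classical
  have hdot : ∀ (v : Fin n → R) (t : R), v ⬝ᵥ (fun i => t ^ (i : ℕ)) = (ofFn n v).eval t := by
    simp [dotProduct, ofFn_eq_sum_monomial, eval_finsetSum]
  -- Kronecker substitution: `d = (1, t, …, t ^ (n - 1))` for `t` off the roots of every
  -- `ofFn (α - β)`
  have hbad : (⋃ α ∈ A, ⋃ β ∈ A, {t | α ≠ β ∧ (ofFn n α - ofFn n β).IsRoot t}).Finite :=
    A.finite_toSet.biUnion fun α _ => A.finite_toSet.biUnion fun β _ => by
      by_cases h : α = β
      · simp [h]
      · exact (finite_setOfPred_isRoot (sub_ne_zero.2 ((injective_ofFn n).ne h))).subset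
          fun t ht => ht.2
  obtain ⟨t, -, ht⟩ := Set.infinite_univ.exists_notMem_finite hbad
  refine ⟨fun i => t ^ (i : ℕ), fun α hα β hβ h => by_contra fun hne => ht ?_⟩
  simp only [hdot] at h
  simp only [Set.mem_iUnion]
  exact ⟨α, hα, β, hβ, hne, by simp [h]⟩

theorem not_isBounded_of_forall_exists_add_smul_mem {E : Type*} [NormedAddCommGroup E]
    [NormedSpace ℝ E] [FiniteDimensional ℝ E] (hE : 1 < Module.finrank ℝ E) (d : E) {S : Set E}
    (hS : ∀ x, ∃ s : ℝ, x + s • d ∈ S) : ¬ IsBounded S := by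
  have hspan : ℝ ∙ d < ⊤ := span_lt_top_of_card_lt_finrank (by simpa using hE)
  obtain ⟨f, hf, hker⟩ := Submodule.exists_le_ker_of_lt_top _ hspan
  have hfd : f d = 0 := hker (Submodule.mem_span_singleton_self d)
  have himage : Set.univ ⊆ f '' S := fun r _ => by
    obtain ⟨x, rfl⟩ := LinearMap.surjective hf r
    obtain ⟨s, hs⟩ := hS x
    exact ⟨_, hs, by simp [hfd]⟩
  exact fun hb => NormedSpace.unbounded_univ ℝ ℝ
    ((LinearMap.toContinuousLinearMap f).lipschitz.isBounded_image hb |>.subset himage)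

theorem amoeba_finite_of_fin_one {A : Finset (Fin 1 → ℤ)} {c : (Fin 1 → ℤ) → ℂ}
    (hA : A.Nonempty) (hc : ∀ α ∈ A, c α ≠ 0) : (amoeba A c).Finite := by
  have hzeros := finite_setOf_sum_mul_zpow_eq_zero hA hc
    ((Equiv.funUnique (Fin 1) ℤ).injective.injOn (s := A))
  refine Set.Finite.image _ (Set.Finite.of_finite_image (hzeros.subset ?_)
    ((Equiv.funUnique (Fin 1) ℂ).injective.injOn))
  rintro _ ⟨z, ⟨hz, hzero⟩, rfl⟩
  exact ⟨hz 0, by simpa [lEval] using hzero⟩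

theorem exists_add_smul_mem_amoeba {n : ℕ} {A : Finset (Fin n → ℤ)} {c : (Fin n → ℤ) → ℂ}
    (hc : ∀ α ∈ A, c α ≠ 0) (hA : 1 < A.card) {d : Fin n → ℤ} (hd : Set.InjOn (· ⬝ᵥ d) A)
    (x : Fin n → ℝ) : ∃ s : ℝ, x + s • (fun i => (d i : ℝ)) ∈ amoeba A c := by
  obtain ⟨w, hw, hroot⟩ := exists_sum_mul_zpow_eq_zero
    (b := fun α => c α * Complex.exp (∑ i, α i * x i))
    (fun α hα => mul_ne_zero (hc α hα) (Complex.exp_ne_zero _)) hd hA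
  obtain ⟨ζ, rfl⟩ : ∃ ζ, Complex.exp ζ = w := ⟨_, Complex.exp_log hw⟩
  refine ⟨ζ.re, fun i => Complex.exp (x i + d i * ζ), ⟨fun i => Complex.exp_ne_zero _, ?_⟩, ?_⟩
  · rw [lEval, ← hroot]
    refine Finset.sum_congr rfl fun α _ => ?_
    simp only [← Complex.exp_int_mul, ← Complex.exp_sum, mul_assoc, ← Complex.exp_add]
    congr 2
    rw [dotProduct]
    push_cast
    rw [Finset.sum_mul, ← Finset.sum_add_distrib]
    exact Finset.sum_congr rfl fun i _ => by ring
  · ext i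
    simp [logMap, Complex.norm_exp, mul_comm]

/-- In the one-dimensional case the amoeba of a nonzero Laurent polynomial is
a finite set of points; in contrast, for `n ≥ 2`, if the support contains at
least two points then the amoeba is a nonempty unbounded subset of `ℝⁿ`. -/
theorem stmt_19 {n : ℕ} (A : Finset (Fin n → ℤ)) (c : (Fin n → ℤ) → ℂ)
    (hA : A.Nonempty) (hc : ∀ α ∈ A, c α ≠ 0) :
    (n = 1 → (amoeba A c).Finite) ∧
    (2 ≤ n → 2 ≤ A.card →
      (amoeba A c).Nonempty ∧ ¬ Bornology.IsBounded (amoeba A c)) := by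
  refine ⟨fun hn => ?_, fun hn hcard => ?_⟩
  · subst hn
    exact amoeba_finite_of_fin_one hA hc
  · obtain ⟨d, hd⟩ := exists_injOn_dotProduct A
    have hline := exists_add_smul_mem_amoeba hc hcard hd
    refine ⟨⟨_, (hline 0).choose_spec⟩, not_isBounded_of_forall_exists_add_smul_mem ?_ _ hline⟩
    rwa [Module.finrank_fin_fun]
end
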